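/- arXiv:2302.11109 — 5 statements merged into one kernel-verified Lean document; each statement's English description precedes it below -/
import Mathlib

section
/- Let R be a commutative ring, n a natural number, (V_v, d_{v,i}) a commuting cube of R-modules, and π a permutation of {1,…,n}. Let D be the signed differential whose component from V_v to V_{v+e_i} is (−1)^{v_{i+1}+⋯+v_n}·d_{v,i}, and let D_π be the signed differential whose component from V_v to V_{v+e_i} is (−1)^{Σ_{j : π^{-1}(j) > π^{-1}(i)} v_j}·d_{v,i}. Then there exist signs s_v ∈ {1, −1} for v ∈ {0,1}^n such that the diagonal isomorphism S of ⨁_v V_v acting on V_v by multiplication by s_v satisfies S ∘ D = D_π ∘ S; in particular the two signed cube complexes are isomorphic and have the same homology. -/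
open DirectSum

namespace CubeAux
open Finset

lemma cube_count_D (n : ℕ) (π : Equiv.Perm (Fin n)) (v : Fin n → Bool) (i : Fin n) :
    (univ.filter (fun j : Fin n => i < j ∧ v j = true)).card
    = (univ.filter (fun j => i < j ∧ v j = true ∧ π.symm j < π.symm i)).card
      + (univ.filter (fun j => i < j ∧ v j = true ∧ π.symm i < π.symm j)).card := by
  have h := Finset.card_filter_add_card_filter_not
    (s := univ.filter (fun j : Fin n => i < j ∧ v j = true))
    (p := fun j => π.symm j < π.symm i)
  rw [filter_filter, filter_filter] at h
  rw [← h]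
  congr 2
  · ext j; simp [and_assoc]
  · ext j
    simp only [mem_filter, mem_univ, true_and, and_assoc, not_lt]
    refine and_congr_right fun hij => and_congr_right fun _ => ⟨fun h' => ?_, fun h' => h'.le⟩
    exact lt_of_le_of_ne h' (fun he => hij.ne (π.symm.injective he.symm).symm)

lemma cube_count_pi (n : ℕ) (π : Equiv.Perm (Fin n)) (v : Fin n → Bool) (i : Fin n)
    (hv : v i = false) :
    (univ.filter (fun j : Fin n => π.symm i < π.symm j ∧ v j = true)).card
    = (univ.filter (fun j => i < j ∧ v j = true ∧ π.symm i < π.symm j)).card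
      + (univ.filter (fun j => j < i ∧ v j = true ∧ π.symm i < π.symm j)).card := by
  have h := Finset.card_filter_add_card_filter_not
    (s := univ.filter (fun j : Fin n => π.symm i < π.symm j ∧ v j = true))
    (p := fun j => i < j)
  rw [filter_filter, filter_filter] at h
  rw [← h]
  congr 2
  · ext j; simp only [mem_filter, mem_univ, true_and]; tauto
  · ext j
    simp only [mem_filter, mem_univ, true_and, not_lt]
    constructor
    · rintro ⟨⟨h1, h2⟩, h3⟩
      refine ⟨lt_of_le_of_ne h3 ?_, h2, h1⟩
      intro he; subst he; rw [hv] at h2; exact Bool.false_ne_true h2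
    · rintro ⟨h1, h2, h3⟩; exact ⟨⟨h3, h2⟩, h1.le⟩

lemma cube_P_update (n : ℕ) (π : Equiv.Perm (Fin n)) (v : Fin n → Bool) (i : Fin n)
    (hv : v i = false) :
    (univ.filter (fun p : Fin n × Fin n => p.1 < p.2 ∧ Function.update v i true p.1 = true ∧
        Function.update v i true p.2 = true ∧ π.symm p.2 < π.symm p.1)).card
    = (univ.filter (fun p : Fin n × Fin n => p.1 < p.2 ∧ v p.1 = true ∧ v p.2 = true ∧
        π.symm p.2 < π.symm p.1)).card
      + (univ.filter (fun j => i < j ∧ v j = true ∧ π.symm j < π.symm i)).card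
      + (univ.filter (fun j => j < i ∧ v j = true ∧ π.symm i < π.symm j)).card := by
  have hset : (univ.filter (fun p : Fin n × Fin n => p.1 < p.2 ∧
        Function.update v i true p.1 = true ∧
        Function.update v i true p.2 = true ∧ π.symm p.2 < π.symm p.1))
    = ((univ.filter (fun p : Fin n × Fin n => p.1 < p.2 ∧ v p.1 = true ∧ v p.2 = true ∧
        π.symm p.2 < π.symm p.1))
      ∪ ((univ.filter (fun j => i < j ∧ v j = true ∧ π.symm j < π.symm i)).image
          (fun j => (i, j))))
      ∪ ((univ.filter (fun j => j < i ∧ v j = true ∧ π.symm i < π.symm j)).image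
          (fun j => (j, i))) := by
    ext ⟨a, b⟩
    simp only [mem_filter, mem_union, mem_image, mem_univ, true_and, Prod.mk.injEq,
      Function.update_apply]
    by_cases ha : a = i <;> by_cases hb : b = i <;> subst_vars <;>
      simp_all <;> aesop
  have hd1 : Disjoint
      (univ.filter (fun p : Fin n × Fin n => p.1 < p.2 ∧ v p.1 = true ∧ v p.2 = true ∧
        π.symm p.2 < π.symm p.1))
      ((univ.filter (fun j => i < j ∧ v j = true ∧ π.symm j < π.symm i)).image
          (fun j => (i, j))) := by
    rw [disjoint_left]
    rintro ⟨a, b⟩ h1 h2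
    simp only [mem_filter, mem_image, mem_univ, true_and, Prod.mk.injEq] at h1 h2
    obtain ⟨j, hj, hia, hjb⟩ := h2
    rw [← hia, hv] at h1
    exact Bool.false_ne_true h1.2.1
  have hd2 : Disjoint
      ((univ.filter (fun p : Fin n × Fin n => p.1 < p.2 ∧ v p.1 = true ∧ v p.2 = true ∧
        π.symm p.2 < π.symm p.1))
      ∪ ((univ.filter (fun j => i < j ∧ v j = true ∧ π.symm j < π.symm i)).image
          (fun j => (i, j))))
      ((univ.filter (fun j => j < i ∧ v j = true ∧ π.symm i < π.symm j)).image
          (fun j => (j, i))) := by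
    rw [disjoint_left]
    rintro ⟨a, b⟩ h1 h2
    simp only [mem_filter, mem_union, mem_image, mem_univ, true_and, Prod.mk.injEq] at h1 h2
    obtain ⟨j, hj, hja, hji⟩ := h2
    rcases h1 with ⟨_, _, h, _⟩ | ⟨k, hk, hki, hkb⟩
    · rw [← hji, hv] at h; exact Bool.false_ne_true h
    · have hji2 : j = i := hja.trans hki.symm
      rw [hji2] at hj
      exact lt_irrefl _ hj.1
  rw [hset, card_union_of_disjoint hd2, card_union_of_disjoint hd1,
      card_image_of_injective _ (fun a b h => (Prod.mk.injEq _ _ _ _ ▸ h).2),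
      card_image_of_injective _ (fun a b h => (Prod.mk.injEq _ _ _ _ ▸ h).1)]

end CubeAux

open Finset CubeAux

/-- For a commuting cube of `R`-modules and a permutation `π` of the
coordinates, the signed cube differential `D` (with signs `(-1)^(v_{i+1}+⋯+v_n)`) and the
reordered signed differential `Dπ` (with signs `(-1)^(#{j | π⁻¹ j > π⁻¹ i, v j = 1})`)
are intertwined by a diagonal sign change: there are signs `s v ∈ {1, -1}` such that the
diagonal map `S` acting by `s v` on `V v` satisfies `S ∘ D = Dπ ∘ S`. -/
theorem cube_differential_reordering
    (R : Type*) [CommRing R] (n : ℕ) (π : Equiv.Perm (Fin n))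
    (V : (Fin n → Bool) → Type*)
    [∀ v, AddCommGroup (V v)] [∀ v, Module R (V v)]
    (d : ∀ (v : Fin n → Bool) (i : Fin n), V v →ₗ[R] V (Function.update v i true))
    (hcomm : ∀ (v : Fin n → Bool) (i j : Fin n), i ≠ j → v i = false → v j = false →
      (DirectSum.lof R (Fin n → Bool) V
          (Function.update (Function.update v j true) i true)).comp
        ((d (Function.update v j true) i).comp (d v j)) =
      (DirectSum.lof R (Fin n → Bool) V
          (Function.update (Function.update v i true) j true)).comp
        ((d (Function.update v i true) j).comp (d v i)))
    (D : (⨁ v, V v) →ₗ[R] ⨁ v, V v)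
    (hD : D = DirectSum.toModule R (Fin n → Bool) (⨁ v, V v) (fun v =>
      ∑ i : Fin n,
        if v i = false then
          ((-1 : R) ^ (Finset.univ.filter (fun j : Fin n => i < j ∧ v j = true)).card) •
            ((DirectSum.lof R (Fin n → Bool) V (Function.update v i true)).comp (d v i))
        else 0))
    (Dπ : (⨁ v, V v) →ₗ[R] ⨁ v, V v)
    (hDπ : Dπ = DirectSum.toModule R (Fin n → Bool) (⨁ v, V v) (fun v =>
      ∑ i : Fin n,
        if v i = false then
          ((-1 : R) ^
              (Finset.univ.filter (fun j : Fin n => π.symm i < π.symm j ∧ v j = true)).card) •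
            ((DirectSum.lof R (Fin n → Bool) V (Function.update v i true)).comp (d v i))
        else 0)) :
    ∃ s : (Fin n → Bool) → R, (∀ v, s v = 1 ∨ s v = -1) ∧
      (DirectSum.toModule R (Fin n → Bool) (⨁ v, V v) (fun v =>
          s v • DirectSum.lof R (Fin n → Bool) V v)).comp D =
        Dπ.comp (DirectSum.toModule R (Fin n → Bool) (⨁ v, V v) (fun v =>
          s v • DirectSum.lof R (Fin n → Bool) V v)) := by
  classical
  set P : (Fin n → Bool) → ℕ := fun w =>
    (univ.filter (fun p : Fin n × Fin n => p.1 < p.2 ∧ w p.1 = true ∧ w p.2 = true ∧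
      π.symm p.2 < π.symm p.1)).card with hPdef
  refine ⟨fun w => (-1 : R) ^ P w, fun w => ?_, ?_⟩
  · rcases Nat.even_or_odd (P w) with h | h
    · exact Or.inl h.neg_one_pow
    · exact Or.inr h.neg_one_pow
  subst hD hDπ
  apply DirectSum.linearMap_ext
  intro w
  apply LinearMap.ext
  intro x
  simp only [LinearMap.comp_apply, DirectSum.toModule_lof, LinearMap.smul_apply,
    LinearMap.sum_apply, map_sum, map_smul]
  rw [Finset.smul_sum]
  refine Finset.sum_congr rfl fun i _ => ?_
  by_cases hw : w i = false
  · simp only [hw, if_true, LinearMap.smul_apply, LinearMap.comp_apply, map_smul,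
      DirectSum.toModule_lof, smul_smul]
    congr 1
    rw [← pow_add, ← pow_add]
    simp only [hPdef]
    rw [cube_P_update n π w i hw, cube_count_D n π w i, cube_count_pi n π w i hw]
    set Pw := (univ.filter (fun p : Fin n × Fin n => p.1 < p.2 ∧ w p.1 = true ∧ w p.2 = true ∧
      π.symm p.2 < π.symm p.1)).card
    set A := (univ.filter (fun j => i < j ∧ w j = true ∧ π.symm j < π.symm i)).card
    set A' := (univ.filter (fun j => i < j ∧ w j = true ∧ π.symm i < π.symm j)).card
    set B := (univ.filter (fun j => j < i ∧ w j = true ∧ π.symm i < π.symm j)).card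
    have he : A + A' + (Pw + A + B) = Pw + (A' + B) + 2 * A := by ring
    rw [he, pow_add, pow_mul, neg_one_sq, one_pow, mul_one]
  · simp [hw]
end

section
/- Let R be a commutative ring and let M, N, N', P be ℤ-graded R-modules. Suppose f₀ : M → N, g₀ : N → P, f₀' : M → N', g₀' : N' → P are homogeneous R-linear maps of degree 0, and f₁ : M → N, g₁ : N → P, f₁' : M → N', g₁' : N' → P are homogeneous R-linear maps of degree −1. If (g₀ + g₁) ∘ (f₀ + f₁) = (g₀' + g₁') ∘ (f₀' + f₁'), then for every λ ∈ R one has (g₀ + λ·g₁) ∘ (f₀ + λ·f₁) = (g₀' + λ·g₁') ∘ (f₀' + λ·f₁'). -/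
/-!
Expanding in `λ`, on an element of degree `i` the composite `(g₀ + λ g₁) ∘ (f₀ + λ f₁)` is
`a + λ b + λ² c` with `a`, `b`, `c` of degrees `i`, `i - 1`, `i - 2`. At `λ = 1` the hypothesis
equates the sums of these three homogeneous pieces for the two composites, and since the graded
pieces are independent the pieces themselves agree; hence the composites agree for every `λ` on
homogeneous elements, which span the source.
-/

theorem iSupIndep.eq_zero_of_add_add_eq_zero {R P ι : Type*} [Ring R] [AddCommGroup P]
    [Module R P] {p : ι → Submodule R P} (hp : iSupIndep p) {i j k : ι}
    (hij : i ≠ j) (hik : i ≠ k) (hjk : j ≠ k) {a b c : P}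
    (ha : a ∈ p i) (hb : b ∈ p j) (hc : c ∈ p k) (h : a + b + c = 0) :
    a = 0 ∧ b = 0 ∧ c = 0 := by
  have ha_eq : a = -(b + c) := eq_neg_of_add_eq_zero_left (by rwa [add_assoc] at h)
  have ha0 : a = 0 :=
    Submodule.disjoint_def.mp (hp.disjoint_biSup (y := {j, k}) (by simp [hij, hik])) a ha
      (by rw [iSup_pair, ha_eq]; exact neg_mem (Submodule.add_mem_sup hb hc))
  rw [ha0, zero_add] at h
  have hb0 : b = 0 := Submodule.disjoint_def.mp (hp.pairwiseDisjoint hjk) b hb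
    (by rw [eq_neg_of_add_eq_zero_left h]; exact neg_mem hc)
  rw [hb0, zero_add] at h
  exact ⟨ha0, hb0, h⟩

theorem LinearMap.ext_of_iSup_eq_top {R M P ι : Type*} [Semiring R] [AddCommMonoid M]
    [Module R M] [AddCommMonoid P] [Module R P] {p : ι → Submodule R M} (hp : iSup p = ⊤)
    {f g : M →ₗ[R] P} (h : ∀ i, Set.EqOn f g (p i)) : f = g := by
  have htop : ⊤ ≤ LinearMap.eqLocus f g :=
    hp ▸ iSup_le fun i => LinearMap.le_eqLocus.mpr (h i)
  exact LinearMap.ext fun x => htop Submodule.mem_top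

theorem LinearMap.add_smul_comp_add_smul_apply {R M N P : Type*} [CommSemiring R]
    [AddCommMonoid M] [Module R M] [AddCommMonoid N] [Module R N] [AddCommMonoid P] [Module R P]
    (f₀ f₁ : M →ₗ[R] N) (g₀ g₁ : N →ₗ[R] P) (t : R) (x : M) :
    (g₀ + t • g₁).comp (f₀ + t • f₁) x =
      g₀ (f₀ x) + t • (g₀ (f₁ x) + g₁ (f₀ x)) + (t * t) • g₁ (f₁ x) := by
  simp only [LinearMap.comp_apply, LinearMap.add_apply, LinearMap.smul_apply, map_add, map_smul,
    smul_add, smul_smul]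
  abel

section Graded

variable {R M N N' P : Type*} [CommRing R] [AddCommGroup M] [Module R M] [AddCommGroup N]
  [Module R N] [AddCommGroup N'] [Module R N'] [AddCommGroup P] [Module R P]
  {𝓜 : ℤ → Submodule R M} {𝓝 : ℤ → Submodule R N} {𝓝' : ℤ → Submodule R N'}
  {𝓟 : ℤ → Submodule R P}

theorem homogeneous_components_eq_of_add_add_eq (hP : iSupIndep 𝓟) {i : ℤ} {a b c a' b' c' : P}
    (ha : a ∈ 𝓟 i) (hb : b ∈ 𝓟 (i - 1)) (hc : c ∈ 𝓟 (i - 1 - 1))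
    (ha' : a' ∈ 𝓟 i) (hb' : b' ∈ 𝓟 (i - 1)) (hc' : c' ∈ 𝓟 (i - 1 - 1))
    (h : a + b + c = a' + b' + c') : a = a' ∧ b = b' ∧ c = c' := by
  have hsum : (a - a') + (b - b') + (c - c') = 0 := by
    rw [← sub_eq_zero.mpr h]
    abel
  obtain ⟨ha0, hb0, hc0⟩ := hP.eq_zero_of_add_add_eq_zero (by omega) (by omega) (by omega)
    (sub_mem ha ha') (sub_mem hb hb') (sub_mem hc hc') hsum
  exact ⟨sub_eq_zero.mp ha0, sub_eq_zero.mp hb0, sub_eq_zero.mp hc0⟩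

theorem comp_expansion_coeffs_mem {f₀ f₁ : M →ₗ[R] N} {g₀ g₁ : N →ₗ[R] P}
    (hf₀ : ∀ i, ∀ x ∈ 𝓜 i, f₀ x ∈ 𝓝 i) (hf₁ : ∀ i, ∀ x ∈ 𝓜 i, f₁ x ∈ 𝓝 (i - 1))
    (hg₀ : ∀ i, ∀ x ∈ 𝓝 i, g₀ x ∈ 𝓟 i) (hg₁ : ∀ i, ∀ x ∈ 𝓝 i, g₁ x ∈ 𝓟 (i - 1))
    {i : ℤ} {x : M} (hx : x ∈ 𝓜 i) :
    g₀ (f₀ x) ∈ 𝓟 i ∧ g₀ (f₁ x) + g₁ (f₀ x) ∈ 𝓟 (i - 1) ∧ g₁ (f₁ x) ∈ 𝓟 (i - 1 - 1) :=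
  ⟨hg₀ _ _ (hf₀ _ _ hx), add_mem (hg₀ _ _ (hf₁ _ _ hx)) (hg₁ _ _ (hf₀ _ _ hx)),
    hg₁ _ _ (hf₁ _ _ hx)⟩

theorem add_smul_comp_add_smul_apply_eq_of_homogeneous (hP : iSupIndep 𝓟)
    {f₀ f₁ : M →ₗ[R] N} {g₀ g₁ : N →ₗ[R] P} {f₀' f₁' : M →ₗ[R] N'} {g₀' g₁' : N' →ₗ[R] P}
    (hf₀ : ∀ i, ∀ x ∈ 𝓜 i, f₀ x ∈ 𝓝 i) (hf₁ : ∀ i, ∀ x ∈ 𝓜 i, f₁ x ∈ 𝓝 (i - 1))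
    (hg₀ : ∀ i, ∀ x ∈ 𝓝 i, g₀ x ∈ 𝓟 i) (hg₁ : ∀ i, ∀ x ∈ 𝓝 i, g₁ x ∈ 𝓟 (i - 1))
    (hf₀' : ∀ i, ∀ x ∈ 𝓜 i, f₀' x ∈ 𝓝' i) (hf₁' : ∀ i, ∀ x ∈ 𝓜 i, f₁' x ∈ 𝓝' (i - 1))
    (hg₀' : ∀ i, ∀ x ∈ 𝓝' i, g₀' x ∈ 𝓟 i) (hg₁' : ∀ i, ∀ x ∈ 𝓝' i, g₁' x ∈ 𝓟 (i - 1))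
    {i : ℤ} {x : M} (hx : x ∈ 𝓜 i)
    (h : (g₀ + g₁).comp (f₀ + f₁) x = (g₀' + g₁').comp (f₀' + f₁') x) (t : R) :
    (g₀ + t • g₁).comp (f₀ + t • f₁) x = (g₀' + t • g₁').comp (f₀' + t • f₁') x := by
  obtain ⟨ha, hb, hc⟩ := comp_expansion_coeffs_mem hf₀ hf₁ hg₀ hg₁ hx
  obtain ⟨ha', hb', hc'⟩ := comp_expansion_coeffs_mem hf₀' hf₁' hg₀' hg₁' hx
  rw [← one_smul R g₁, ← one_smul R f₁, ← one_smul R g₁', ← one_smul R f₁',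
    LinearMap.add_smul_comp_add_smul_apply, LinearMap.add_smul_comp_add_smul_apply] at h
  simp only [one_smul, mul_one] at h
  obtain ⟨ea, eb, ec⟩ := homogeneous_components_eq_of_add_add_eq hP ha hb hc ha' hb' hc' h
  rw [LinearMap.add_smul_comp_add_smul_apply, LinearMap.add_smul_comp_add_smul_apply, ea, eb, ec]

end Graded

theorem deformation_commutativity_from_lambda_one_general
    (R M N N' P : Type*) [CommRing R]
    [AddCommGroup M] [Module R M] [AddCommGroup N] [Module R N]
    [AddCommGroup N'] [Module R N'] [AddCommGroup P] [Module R P]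
    (𝓜 : ℤ → Submodule R M) (𝓝 : ℤ → Submodule R N)
    (𝓝' : ℤ → Submodule R N') (𝓟 : ℤ → Submodule R P)
    (hM : DirectSum.IsInternal 𝓜)
    (hP : DirectSum.IsInternal 𝓟)
    (f₀ f₁ : M →ₗ[R] N) (g₀ g₁ : N →ₗ[R] P)
    (f₀' f₁' : M →ₗ[R] N') (g₀' g₁' : N' →ₗ[R] P)
    (hf₀ : ∀ (i : ℤ), ∀ x ∈ 𝓜 i, f₀ x ∈ 𝓝 i)
    (hf₁ : ∀ (i : ℤ), ∀ x ∈ 𝓜 i, f₁ x ∈ 𝓝 (i - 1))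
    (hg₀ : ∀ (i : ℤ), ∀ x ∈ 𝓝 i, g₀ x ∈ 𝓟 i)
    (hg₁ : ∀ (i : ℤ), ∀ x ∈ 𝓝 i, g₁ x ∈ 𝓟 (i - 1))
    (hf₀' : ∀ (i : ℤ), ∀ x ∈ 𝓜 i, f₀' x ∈ 𝓝' i)
    (hf₁' : ∀ (i : ℤ), ∀ x ∈ 𝓜 i, f₁' x ∈ 𝓝' (i - 1))
    (hg₀' : ∀ (i : ℤ), ∀ x ∈ 𝓝' i, g₀' x ∈ 𝓟 i)
    (hg₁' : ∀ (i : ℤ), ∀ x ∈ 𝓝' i, g₁' x ∈ 𝓟 (i - 1))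
    (h : (g₀ + g₁).comp (f₀ + f₁) = (g₀' + g₁').comp (f₀' + f₁')) :
    ∀ lam : R,
      (g₀ + lam • g₁).comp (f₀ + lam • f₁) = (g₀' + lam • g₁').comp (f₀' + lam • f₁') := by
  intro lam
  refine LinearMap.ext_of_iSup_eq_top hM.submodule_iSup_eq_top fun i x hx => ?_
  exact add_smul_comp_add_smul_apply_eq_of_homogeneous hP.submodule_iSupIndep hf₀ hf₁ hg₀ hg₁
    hf₀' hf₁' hg₀' hg₁' hx (LinearMap.congr_fun h x) lam

/-- Let `M, N, N', P` be ℤ-graded `R`-modules (internal direct sums of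
the submodules `𝓜 i`, `𝓝 i`, `𝓝' i`, `𝓟 i`).  Suppose `f₀, g₀, f₀', g₀'` are homogeneous
of degree `0` and `f₁, g₁, f₁', g₁'` are homogeneous of degree `-1` as indicated.  If
`(g₀ + g₁) ∘ (f₀ + f₁) = (g₀' + g₁') ∘ (f₀' + f₁')`, then for every `λ ∈ R`,
`(g₀ + λ•g₁) ∘ (f₀ + λ•f₁) = (g₀' + λ•g₁') ∘ (f₀' + λ•f₁')`. -/
theorem deformation_commutativity_from_lambda_one
    (R M N N' P : Type*) [CommRing R]
    [AddCommGroup M] [Module R M] [AddCommGroup N] [Module R N]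
    [AddCommGroup N'] [Module R N'] [AddCommGroup P] [Module R P]
    (𝓜 : ℤ → Submodule R M) (𝓝 : ℤ → Submodule R N)
    (𝓝' : ℤ → Submodule R N') (𝓟 : ℤ → Submodule R P)
    (hM : DirectSum.IsInternal 𝓜) (hN : DirectSum.IsInternal 𝓝)
    (hN' : DirectSum.IsInternal 𝓝') (hP : DirectSum.IsInternal 𝓟)
    (f₀ f₁ : M →ₗ[R] N) (g₀ g₁ : N →ₗ[R] P)
    (f₀' f₁' : M →ₗ[R] N') (g₀' g₁' : N' →ₗ[R] P)
    (hf₀ : ∀ (i : ℤ), ∀ x ∈ 𝓜 i, f₀ x ∈ 𝓝 i)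
    (hf₁ : ∀ (i : ℤ), ∀ x ∈ 𝓜 i, f₁ x ∈ 𝓝 (i - 1))
    (hg₀ : ∀ (i : ℤ), ∀ x ∈ 𝓝 i, g₀ x ∈ 𝓟 i)
    (hg₁ : ∀ (i : ℤ), ∀ x ∈ 𝓝 i, g₁ x ∈ 𝓟 (i - 1))
    (hf₀' : ∀ (i : ℤ), ∀ x ∈ 𝓜 i, f₀' x ∈ 𝓝' i)
    (hf₁' : ∀ (i : ℤ), ∀ x ∈ 𝓜 i, f₁' x ∈ 𝓝' (i - 1))
    (hg₀' : ∀ (i : ℤ), ∀ x ∈ 𝓝' i, g₀' x ∈ 𝓟 i)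
    (hg₁' : ∀ (i : ℤ), ∀ x ∈ 𝓝' i, g₁' x ∈ 𝓟 (i - 1))
    (h : (g₀ + g₁).comp (f₀ + f₁) = (g₀' + g₁').comp (f₀' + f₁')) :
    ∀ lam : R,
      (g₀ + lam • g₁).comp (f₀ + lam • f₁) = (g₀' + lam • g₁').comp (f₀' + lam • f₁') :=
  deformation_commutativity_from_lambda_one_general R M N N' P 𝓜 𝓝 𝓝' 𝓟 hM hP f₀ f₁ g₀ g₁ f₀' f₁'
    g₀' g₁' hf₀ hf₁ hg₀ hg₁ hf₀' hf₁' hg₀' hg₁' h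
end

section
/- Let R be a commutative ring, λ ∈ R, V the free R-module on {v₊, v₋}, W the free R-module on {w₊, w₋}, and let ε, δ, ν_λ, μ'_λ be the band surgery maps defined in the context. Then (ε ⊗ id_W) ∘ (id_W ⊗ ν_λ) = δ ∘ μ'_λ as R-linear maps W ⊗ W → V ⊗ W; explicitly, both maps send w₊⊗w₋ to λ·v₋⊗w₋ and vanish on the other three basis tensors. -/
open TensorProduct

theorem TensorProduct.ext_basis {R M N P ι κ : Type*} [CommSemiring R]
    [AddCommMonoid M] [Module R M] [AddCommMonoid N] [Module R N] [AddCommMonoid P] [Module R P]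
    (b : Module.Basis ι R M) (c : Module.Basis κ R N) {f g : M ⊗[R] N →ₗ[R] P}
    (h : ∀ i j, f (b i ⊗ₜ c j) = g (b i ⊗ₜ c j)) : f = g :=
  (b.tensorProduct c).ext fun ⟨i, j⟩ => by simpa using h i j

theorem TensorProduct.map_comp_assoc_symm_comp_map_tmul_of_eq_smul_tmul
    {R M N P Q Q' : Type*} [CommSemiring R]
    [AddCommMonoid M] [Module R M] [AddCommMonoid N] [Module R N] [AddCommMonoid P] [Module R P]
    [AddCommMonoid Q] [Module R Q] [AddCommMonoid Q'] [Module R Q']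
    (f : M ⊗[R] N →ₗ[R] P) (g : Q →ₗ[R] N ⊗[R] Q') {y : Q} {s : R} {n : N} {q : Q'}
    (hg : g y = s • (n ⊗ₜ q)) (x : M) :
    ((map f (LinearMap.id : Q' →ₗ[R] Q')).comp
        (((TensorProduct.assoc R M N Q').symm.toLinearMap).comp
          (map (LinearMap.id : M →ₗ[R] M) g))) (x ⊗ₜ y) = s • (f (x ⊗ₜ n) ⊗ₜ q) := by
  simp [hg, tmul_smul]

theorem twice_punctured_disk_commutativity_general
    {R V W : Type*} [CommRing R] [AddCommGroup V] [Module R V]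
    [AddCommGroup W] [Module R W] (lam : R)
    (vm : V)
    (c : Module.Basis Bool R W) (wp wm : W) (hwp : wp = c true) (hwm : wm = c false)
    (ε : W ⊗[R] W →ₗ[R] V)
    (hε₁ : ε (wp ⊗ₜ wm) = vm)
    (hε₄ : ε (wm ⊗ₜ wm) = 0)
    (δ : W →ₗ[R] V ⊗[R] W)
    (hδ₂ : δ wm = vm ⊗ₜ wm)
    (ν : W →ₗ[R] W ⊗[R] W)
    (hν₁ : ν wm = lam • (wm ⊗ₜ wm)) (hν₂ : ν wp = 0)
    (μ' : W ⊗[R] W →ₗ[R] W)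
    (hμ'₁ : μ' (wp ⊗ₜ wm) = lam • wm) (hμ'₂ : μ' (wp ⊗ₜ wp) = 0)
    (hμ'₃ : μ' (wm ⊗ₜ wp) = 0) (hμ'₄ : μ' (wm ⊗ₜ wm) = 0) :
    (TensorProduct.map ε (LinearMap.id : W →ₗ[R] W)).comp
        (((TensorProduct.assoc R W W W).symm.toLinearMap).comp
          (TensorProduct.map (LinearMap.id : W →ₗ[R] W) ν)) =
      δ.comp μ' ∧
    (δ.comp μ') (wp ⊗ₜ wm) = lam • (vm ⊗ₜ wm) ∧
    (δ.comp μ') (wp ⊗ₜ wp) = 0 ∧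
    (δ.comp μ') (wm ⊗ₜ wp) = 0 ∧
    (δ.comp μ') (wm ⊗ₜ wm) = 0 := by
  have hpm : (δ.comp μ') (wp ⊗ₜ wm) = lam • (vm ⊗ₜ wm) := by
    simp [hμ'₁, hδ₂]
  refine ⟨?_, hpm, by simp [hμ'₂], by simp [hμ'₃], by simp [hμ'₄]⟩
  refine TensorProduct.ext_basis c c fun i j => ?_
  cases i <;> cases j <;> simp only [← hwp, ← hwm]
  · rw [map_comp_assoc_symm_comp_map_tmul_of_eq_smul_tmul ε ν hν₁, hε₄]
    simp [hμ'₄]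
  · simp [hν₂, hμ'₃]
  · rw [map_comp_assoc_symm_comp_map_tmul_of_eq_smul_tmul ε ν hν₁, hε₁, hpm]
  · simp [hν₂, hμ'₂]

/-- With `V` free on `{v₊, v₋}`, `W` free on `{w₊, w₋}`, and band
surgery maps `ε, δ, ν_λ, μ'_λ` as in the context, one has
`(ε ⊗ id_W) ∘ (id_W ⊗ ν_λ) = δ ∘ μ'_λ : W ⊗ W → V ⊗ W`; explicitly both maps send
`w₊ ⊗ w₋` to `λ·v₋ ⊗ w₋` and vanish on the other three basis tensors. -/
theorem twice_punctured_disk_commutativity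
    {R V W : Type*} [CommRing R] [AddCommGroup V] [Module R V]
    [AddCommGroup W] [Module R W] (lam : R)
    (b : Module.Basis Bool R V) (vp vm : V) (hvp : vp = b true) (hvm : vm = b false)
    (c : Module.Basis Bool R W) (wp wm : W) (hwp : wp = c true) (hwm : wm = c false)
    (ε : W ⊗[R] W →ₗ[R] V)
    (hε₁ : ε (wp ⊗ₜ wm) = vm) (hε₂ : ε (wm ⊗ₜ wp) = vm)
    (hε₃ : ε (wp ⊗ₜ wp) = 0) (hε₄ : ε (wm ⊗ₜ wm) = 0)
    (δ : W →ₗ[R] V ⊗[R] W)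
    (hδ₁ : δ wp = vm ⊗ₜ wp) (hδ₂ : δ wm = vm ⊗ₜ wm)
    (ν : W →ₗ[R] W ⊗[R] W)
    (hν₁ : ν wm = lam • (wm ⊗ₜ wm)) (hν₂ : ν wp = 0)
    (μ' : W ⊗[R] W →ₗ[R] W)
    (hμ'₁ : μ' (wp ⊗ₜ wm) = lam • wm) (hμ'₂ : μ' (wp ⊗ₜ wp) = 0)
    (hμ'₃ : μ' (wm ⊗ₜ wp) = 0) (hμ'₄ : μ' (wm ⊗ₜ wm) = 0) :
    (TensorProduct.map ε (LinearMap.id : W →ₗ[R] W)).comp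
        (((TensorProduct.assoc R W W W).symm.toLinearMap).comp
          (TensorProduct.map (LinearMap.id : W →ₗ[R] W) ν)) =
      δ.comp μ' ∧
    (δ.comp μ') (wp ⊗ₜ wm) = lam • (vm ⊗ₜ wm) ∧
    (δ.comp μ') (wp ⊗ₜ wp) = 0 ∧
    (δ.comp μ') (wm ⊗ₜ wp) = 0 ∧
    (δ.comp μ') (wm ⊗ₜ wm) = 0 :=
  twice_punctured_disk_commutativity_general lam vm c wp wm hwp hwm ε hε₁ hε₄ δ hδ₂ ν hν₁ hν₂ μ'
    hμ'₁ hμ'₂ hμ'₃ hμ'₄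
end

section
/- Let R be a commutative ring, V the free R-module on {v₊, v₋}, W the free R-module on {w₊, w₋}, and let m, ε, η be the band surgery maps defined in the context. Then ε ∘ (η ⊗ id_W) = m ∘ (id_V ⊗ ε) as R-linear maps V ⊗ W ⊗ W → V. -/
/-!
The map `ε` takes values in `R ∙ v₋`, where `m (v₊ ⊗ₜ -)` acts as the identity and
`m (v₋ ⊗ₜ -)` as zero, just as `η (v₊ ⊗ₜ -)` and `η (v₋ ⊗ₜ -)` act on `W`. Hence both sides
agree on `x ⊗ₜ w ⊗ₜ w'` for `x ∈ {v₊, v₋}` and arbitrary `w, w'`.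
-/

open TensorProduct

theorem LinearMap.range_le_span_singleton_of_basis {ι R M N : Type*} [Semiring R]
    [AddCommMonoid M] [Module R M] [AddCommMonoid N] [Module R N]
    (e : Module.Basis ι R M) (f : M →ₗ[R] N) (v : N) (h : ∀ i, f (e i) ∈ R ∙ v) :
    LinearMap.range f ≤ R ∙ v := by
  rw [LinearMap.range_eq_map, ← e.span_eq, Submodule.map_span, Submodule.span_le]
  rintro _ ⟨_, ⟨i, rfl⟩, rfl⟩
  exact h i

theorem merge_contractible_with_two_noncontractible_general
    {R V W : Type*} [CommRing R] [AddCommGroup V] [Module R V]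
    [AddCommGroup W] [Module R W]
    (b : Module.Basis Bool R V) (vp vm : V) (hvp : vp = b true) (hvm : vm = b false)
    (c : Module.Basis Bool R W) (wp wm : W) (hwp : wp = c true) (hwm : wm = c false)
    (m : V ⊗[R] V →ₗ[R] V)
    (hm₂ : m (vp ⊗ₜ vm) = vm)
    (hm₄ : m (vm ⊗ₜ vm) = 0)
    (ε : W ⊗[R] W →ₗ[R] V)
    (hε₁ : ε (wp ⊗ₜ wm) = vm) (hε₂ : ε (wm ⊗ₜ wp) = vm)
    (hε₃ : ε (wp ⊗ₜ wp) = 0) (hε₄ : ε (wm ⊗ₜ wm) = 0)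
    (η : V ⊗[R] W →ₗ[R] W)
    (hη₁ : ∀ w : W, η (vp ⊗ₜ w) = w) (hη₂ : ∀ w : W, η (vm ⊗ₜ w) = 0) :
    ε.comp (TensorProduct.map η (LinearMap.id : W →ₗ[R] W)) =
      (m.comp (TensorProduct.map (LinearMap.id : V →ₗ[R] V) ε)).comp
        (TensorProduct.assoc R V W W).toLinearMap := by
  have hε : ∀ t, ε t ∈ R ∙ vm := fun t =>
    LinearMap.range_le_span_singleton_of_basis (c.tensorProduct c) ε vm
      (by rintro ⟨_ | _, _ | _⟩ <;> simp [← hwp, ← hwm, hε₁, hε₂, hε₃, hε₄]) ⟨t, rfl⟩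
  have hmp : ∀ t, m (vp ⊗ₜ ε t) = ε t := fun t =>
    LinearMap.eqOn_span (f := m ∘ₗ mk R V V vp) (g := LinearMap.id) (by simpa using hm₂) (hε t)
  have hmm : ∀ t, m (vm ⊗ₜ ε t) = 0 := fun t =>
    LinearMap.eqOn_span (f := m ∘ₗ mk R V V vm) (g := 0) (by simpa using hm₄) (hε t)
  refine ((b.tensorProduct c).tensorProduct c).ext ?_
  rintro ⟨⟨_ | _, j⟩, k⟩ <;> simp [← hvp, ← hvm, hη₁, hη₂, hmp, hmm]

/-- With `V` free on `{v₊, v₋}`, `W` free on `{w₊, w₋}`, and band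
surgery maps `m, ε, η` as in the context, one has
`ε ∘ (η ⊗ id_W) = m ∘ (id_V ⊗ ε)` as linear maps `V ⊗ W ⊗ W → V`. -/
theorem merge_contractible_with_two_noncontractible
    {R V W : Type*} [CommRing R] [AddCommGroup V] [Module R V]
    [AddCommGroup W] [Module R W]
    (b : Module.Basis Bool R V) (vp vm : V) (hvp : vp = b true) (hvm : vm = b false)
    (c : Module.Basis Bool R W) (wp wm : W) (hwp : wp = c true) (hwm : wm = c false)
    (m : V ⊗[R] V →ₗ[R] V)
    (hm₁ : m (vp ⊗ₜ vp) = vp) (hm₂ : m (vp ⊗ₜ vm) = vm)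
    (hm₃ : m (vm ⊗ₜ vp) = vm) (hm₄ : m (vm ⊗ₜ vm) = 0)
    (ε : W ⊗[R] W →ₗ[R] V)
    (hε₁ : ε (wp ⊗ₜ wm) = vm) (hε₂ : ε (wm ⊗ₜ wp) = vm)
    (hε₃ : ε (wp ⊗ₜ wp) = 0) (hε₄ : ε (wm ⊗ₜ wm) = 0)
    (η : V ⊗[R] W →ₗ[R] W)
    (hη₁ : ∀ w : W, η (vp ⊗ₜ w) = w) (hη₂ : ∀ w : W, η (vm ⊗ₜ w) = 0) :
    ε.comp (TensorProduct.map η (LinearMap.id : W →ₗ[R] W)) =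
      (m.comp (TensorProduct.map (LinearMap.id : V →ₗ[R] V) ε)).comp
        (TensorProduct.assoc R V W W).toLinearMap :=
  merge_contractible_with_two_noncontractible_general b vp vm hvp hvm c wp wm hwp hwm m hm₂ hm₄ ε
    hε₁ hε₂ hε₃ hε₄ η hη₁ hη₂
end

section
/- Let R be a commutative ring, V the free R-module on {v₊, v₋}, W the free R-module on {w₊, w₋}, and let Δ, σ, δ be the band surgery maps defined in the context. Then (δ ⊗ id_W) ∘ σ = (id_V ⊗ σ) ∘ Δ as R-linear maps V → V ⊗ W ⊗ W. -/
open TensorProduct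

theorem split_into_noncontractible_then_split_off_contractible_general
    {R V W : Type*} [CommRing R] [AddCommGroup V] [Module R V]
    [AddCommGroup W] [Module R W]
    (b : Module.Basis Bool R V) (vp vm : V) (hvp : vp = b true) (hvm : vm = b false)
    (wp wm : W)
    (Δ : V →ₗ[R] V ⊗[R] V)
    (hΔ₁ : Δ vp = vp ⊗ₜ vm + vm ⊗ₜ vp) (hΔ₂ : Δ vm = vm ⊗ₜ vm)
    (σ : V →ₗ[R] W ⊗[R] W)
    (hσ₁ : σ vp = wp ⊗ₜ wm + wm ⊗ₜ wp) (hσ₂ : σ vm = 0)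
    (δ : W →ₗ[R] V ⊗[R] W)
    (hδ₁ : δ wp = vm ⊗ₜ wp) (hδ₂ : δ wm = vm ⊗ₜ wm) :
    (TensorProduct.map δ (LinearMap.id : W →ₗ[R] W)).comp σ =
      ((TensorProduct.assoc R V W W).symm.toLinearMap).comp
        ((TensorProduct.map (LinearMap.id : V →ₗ[R] V) σ).comp Δ) := by
  subst hvp hvm
  refine b.ext fun i => ?_
  cases i
  case false =>
    simp [hΔ₂, hσ₂]
  case true =>
    -- the summand `v₊ ⊗ σ v₋` of the right side vanishes; both sides are `v₋ ⊗ σ v₊`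
    simp [hΔ₁, hσ₁, hσ₂, hδ₁, hδ₂, tmul_add]

/-- With `V` free on `{v₊, v₋}`, `W` free on `{w₊, w₋}`, and band
surgery maps `Δ, σ, δ` as in the context, one has
`(δ ⊗ id_W) ∘ σ = (id_V ⊗ σ) ∘ Δ` as linear maps `V → V ⊗ W ⊗ W`. -/
theorem split_into_noncontractible_then_split_off_contractible
    {R V W : Type*} [CommRing R] [AddCommGroup V] [Module R V]
    [AddCommGroup W] [Module R W]
    (b : Module.Basis Bool R V) (vp vm : V) (hvp : vp = b true) (hvm : vm = b false)
    (c : Module.Basis Bool R W) (wp wm : W) (hwp : wp = c true) (hwm : wm = c false)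
    (Δ : V →ₗ[R] V ⊗[R] V)
    (hΔ₁ : Δ vp = vp ⊗ₜ vm + vm ⊗ₜ vp) (hΔ₂ : Δ vm = vm ⊗ₜ vm)
    (σ : V →ₗ[R] W ⊗[R] W)
    (hσ₁ : σ vp = wp ⊗ₜ wm + wm ⊗ₜ wp) (hσ₂ : σ vm = 0)
    (δ : W →ₗ[R] V ⊗[R] W)
    (hδ₁ : δ wp = vm ⊗ₜ wp) (hδ₂ : δ wm = vm ⊗ₜ wm) :
    (TensorProduct.map δ (LinearMap.id : W →ₗ[R] W)).comp σ =
      ((TensorProduct.assoc R V W W).symm.toLinearMap).comp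
        ((TensorProduct.map (LinearMap.id : V →ₗ[R] V) σ).comp Δ) :=
  split_into_noncontractible_then_split_off_contractible_general b vp vm hvp hvm wp wm Δ hΔ₁ hΔ₂ σ
    hσ₁ hσ₂ δ hδ₁ hδ₂
end
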